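/- arXiv:1104.3832 — 4 statements merged into one kernel-verified Lean document; each statement's English description precedes it below -/
import Mathlib

section
/- Let Tl ∈ (0,+∞], let ψ : ℝ × [0,Tl) → ℝ be continuous with continuous partial derivative ∂ψ/∂s, and let s₀ ∈ ℝ. Let W, R : [0,Tl) → ℝ be continuous with d₊W/dt(t) ≤ ψ(W(t),t) for all t ∈ [0,Tl) and W(0) ≤ s₀, and d⁺R/dt(t) ≥ ψ(R(t),t) for all t ∈ [0,Tl) and R(0) ≥ s₀. Let Ts ∈ (0,Tl] and let S : [0,Ts) → ℝ be a C¹ function with S'(t) = ψ(S(t),t) for all t ∈ [0,Ts), S(0) = s₀, and with the maximality property that if Ts < +∞ then S is unbounded on (Ts − η, Ts) for every η ∈ (0,Ts]. Then Ts = Tl, and W(t) ≤ S(t) ≤ R(t) for all t ∈ [0,Tl). -/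
/-!
A continuous function `f` with `d₊f ≤ ψ(f, t)` stays below a solution `g` of `g' = ψ(g, t)`
starting above it: on a compact time interval `∂ψ/∂s` is bounded, so `ψ` is `L`-Lipschitz in `s`
near `g`, and then `f` can never touch the barrier `g + ε e^{(L+1)(t-a)}`, whose right derivative
beats `ψ(f, t)` at a contact point; letting `ε → 0` gives `f ≤ g`. Replacing `s` by `-s` turns
an upper solution into a lower one. Hence `W ≤ S ≤ R` on `[0,Ts)`, and if `Ts < Tl` then `W`
and `R`, being continuous on `[0,Ts]`, would keep `S` bounded near `Ts`, contradicting
maximality.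
-/

open Filter Set

/-- Right upper Dini derivative: `limsup_{h → 0⁺} (f(t+h) − f(t))/h`, valued in `EReal`. -/
noncomputable def diniUpper (f : ℝ → ℝ) (t : ℝ) : EReal :=
  limsup (fun h : ℝ => (((f (t + h) - f t) / h : ℝ) : EReal)) (nhdsWithin 0 (Ioi 0))

/-- Right lower Dini derivative: `liminf_{h → 0⁺} (f(t+h) − f(t))/h`, valued in `EReal`. -/
noncomputable def diniLower (f : ℝ → ℝ) (t : ℝ) : EReal :=
  liminf (fun h : ℝ => (((f (t + h) - f t) / h : ℝ) : EReal)) (nhdsWithin 0 (Ioi 0))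

open scoped Topology

lemma diniLower_neg (f : ℝ → ℝ) (t : ℝ) : diniLower (fun x => -f x) t = -diniUpper f t := by
  have : (fun h : ℝ => (((-f (t + h) - -f t) / h : ℝ) : EReal)) =
      -fun h : ℝ => (((f (t + h) - f t) / h : ℝ) : EReal) := by
    funext h
    rw [Pi.neg_apply, ← EReal.coe_neg, neg_sub_neg, ← neg_sub, neg_div]
  rw [diniLower, diniUpper, this, EReal.liminf_neg]

lemma frequently_slope_lt_of_diniLower_lt {f : ℝ → ℝ} {x r : ℝ} (h : diniLower f x < r) :
    ∃ᶠ z in 𝓝[>] x, slope f x z < r := by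
  have hshift : Tendsto (x + ·) (𝓝[>] 0) (𝓝[>] x) := by
    rw [Tendsto, map_add_left_nhdsGT, add_zero]
  refine hshift.frequently ((frequently_lt_of_liminf_lt (h := h)).mono fun h hh => ?_)
  rwa [slope_def_field, add_sub_cancel_left, ← EReal.coe_lt_coe_iff]

open Real in
theorem le_add_exp_of_diniLower_le {φ : ℝ → ℝ → ℝ} {f g : ℝ → ℝ} {a b L ε : ℝ}
    (hf : ContinuousOn f (Icc a b)) (hf' : ∀ x ∈ Ico a b, diniLower f x ≤ φ (f x) x)
    (hg : ContinuousOn g (Icc a b))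
    (hg' : ∀ x ∈ Ico a b, HasDerivWithinAt g (φ (g x) x) (Ici x) x) (hL : 0 ≤ L)
    (hφ : ∀ x ∈ Ico a b, ∀ s, g x ≤ s → s ≤ g x + 1 → φ s x - φ (g x) x ≤ L * (s - g x))
    (ha : f a ≤ g a) (hε : 0 < ε) (hεb : ε * exp ((L + 1) * (b - a)) ≤ 1) :
    ∀ x ∈ Icc a b, f x ≤ g x + ε * exp ((L + 1) * (x - a)) := by
  have hbarrier (x : ℝ) : HasDerivAt (fun y => ε * exp ((L + 1) * (y - a)))
      ((L + 1) * (ε * exp ((L + 1) * (x - a)))) x := by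
    have := (((hasDerivAt_id x).sub_const a).const_mul (L + 1)).exp.const_mul ε
    rwa [id, mul_one, mul_comm (exp _), ← mul_assoc, mul_comm ε, mul_assoc] at this
  refine image_le_of_liminf_slope_right_lt_deriv_boundary' hf
    (fun x hx r hr =>
      frequently_slope_lt_of_diniLower_lt ((hf' x hx).trans_lt (by exact_mod_cast hr)))
    (by simpa using ha.trans_lt (lt_add_of_pos_right _ hε) |>.le)
    (hg.add (Continuous.continuousOn (by fun_prop)))
    (fun x hx => (hg' x hx).add (hbarrier x).hasDerivWithinAt) ?_
  intro x hx hfx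
  set e := ε * exp ((L + 1) * (x - a))
  have he : 0 < e := by positivity
  have he1 : e ≤ 1 := hεb.trans' <| mul_le_mul_of_nonneg_left
    (exp_le_exp.2 <| mul_le_mul_of_nonneg_left (by linarith [hx.2]) (by linarith)) hε.le
  have hLip := hφ x hx (f x) (by linarith) (by linarith)
  rw [hfx] at hLip ⊢
  linarith

theorem le_of_diniLower_le {φ : ℝ → ℝ → ℝ} {f g : ℝ → ℝ} {a b L : ℝ}
    (hf : ContinuousOn f (Icc a b)) (hf' : ∀ x ∈ Ico a b, diniLower f x ≤ φ (f x) x)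
    (hg : ContinuousOn g (Icc a b))
    (hg' : ∀ x ∈ Ico a b, HasDerivWithinAt g (φ (g x) x) (Ici x) x) (hL : 0 ≤ L)
    (hφ : ∀ x ∈ Ico a b, ∀ s, g x ≤ s → s ≤ g x + 1 → φ s x - φ (g x) x ≤ L * (s - g x))
    (ha : f a ≤ g a) : ∀ x ∈ Icc a b, f x ≤ g x := by
  intro x hx
  set E := Real.exp ((L + 1) * (b - a))
  have hE : 0 < E := Real.exp_pos _
  have hlim : Tendsto (fun ε => g x + ε * Real.exp ((L + 1) * (x - a))) (𝓝[>] 0) (𝓝 (g x)) := by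
    have : Continuous (fun ε => g x + ε * Real.exp ((L + 1) * (x - a))) := by fun_prop
    simpa using this.tendsto 0 |>.mono_left nhdsWithin_le_nhds
  refine ge_of_tendsto hlim ?_
  filter_upwards [Ioo_mem_nhdsGT (inv_pos.2 hE)] with ε hε
  refine le_add_exp_of_diniLower_le hf hf' hg hg' hL hφ ha hε.1 ?_ x hx
  calc ε * E ≤ E⁻¹ * E := mul_le_mul_of_nonneg_right hε.2.le hE.le
    _ = 1 := inv_mul_cancel₀ hE.ne'

theorem exists_abs_sub_le_mul_abs_sub_of_hasDerivAt {ψ ψ' : ℝ → ℝ → ℝ} {T : Set ℝ} {c d : ℝ}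
    (hT : IsCompact T) (hψ : ∀ s ∈ Icc c d, ∀ t ∈ T, HasDerivAt (fun s' => ψ s' t) (ψ' s t) s)
    (hψ' : ContinuousOn (fun p : ℝ × ℝ => ψ' p.1 p.2) (Icc c d ×ˢ T)) :
    ∃ L, 0 ≤ L ∧ ∀ t ∈ T, ∀ s₁ ∈ Icc c d, ∀ s₂ ∈ Icc c d, |ψ s₁ t - ψ s₂ t| ≤ L * |s₁ - s₂| := by
  obtain ⟨L, hL⟩ := (isCompact_Icc.prod hT).exists_bound_of_continuousOn hψ'
  refine ⟨max L 0, le_max_right _ _, fun t ht s₁ hs₁ s₂ hs₂ => ?_⟩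
  simpa only [Real.norm_eq_abs] using (convex_Icc c d).norm_image_sub_le_of_norm_hasDerivWithin_le
    (f := (ψ · t)) (fun s hs => (hψ s hs t ht).hasDerivWithinAt)
    (fun s hs => (hL (s, t) ⟨hs, ht⟩).trans (le_max_left _ _)) hs₂ hs₁

theorem le_of_diniLower_le_of_hasDerivAt {ψ ψ' : ℝ → ℝ → ℝ} {f g : ℝ → ℝ} {a b : ℝ}
    (hψ : ∀ s, ∀ t ∈ Icc a b, HasDerivAt (fun s' => ψ s' t) (ψ' s t) s)
    (hψ' : ContinuousOn (fun p : ℝ × ℝ => ψ' p.1 p.2) (univ ×ˢ Icc a b))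
    (hf : ContinuousOn f (Icc a b)) (hf' : ∀ x ∈ Ico a b, diniLower f x ≤ ψ (f x) x)
    (hg : ContinuousOn g (Icc a b))
    (hg' : ∀ x ∈ Ico a b, HasDerivWithinAt g (ψ (g x) x) (Ici x) x)
    (ha : f a ≤ g a) : ∀ x ∈ Icc a b, f x ≤ g x := by
  obtain ⟨C, hC⟩ := isCompact_Icc.exists_bound_of_continuousOn hg
  obtain ⟨L, hL, hLip⟩ :=
    exists_abs_sub_le_mul_abs_sub_of_hasDerivAt (c := -(C + 1)) (d := C + 1) isCompact_Icc
      (fun s _ t ht => hψ s t ht) (hψ'.mono (prod_mono (subset_univ _) le_rfl))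
  refine le_of_diniLower_le hf hf' hg hg' hL (fun x hx s hs₁ hs₂ => ?_) ha
  have hgx := abs_le.1 (hC x (Ico_subset_Icc_self hx))
  calc ψ s x - ψ (g x) x ≤ |ψ s x - ψ (g x) x| := le_abs_self _
    _ ≤ L * |s - g x| := hLip x (Ico_subset_Icc_self hx) s ⟨by linarith, by linarith⟩ (g x)
        ⟨by linarith, by linarith⟩
    _ = L * (s - g x) := by rw [abs_of_nonneg (by linarith)]

theorem le_of_le_diniUpper_of_hasDerivAt {ψ ψ' : ℝ → ℝ → ℝ} {f g : ℝ → ℝ} {a b : ℝ}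
    (hψ : ∀ s, ∀ t ∈ Icc a b, HasDerivAt (fun s' => ψ s' t) (ψ' s t) s)
    (hψ' : ContinuousOn (fun p : ℝ × ℝ => ψ' p.1 p.2) (univ ×ˢ Icc a b))
    (hf : ContinuousOn f (Icc a b)) (hf' : ∀ x ∈ Ico a b, (ψ (f x) x : EReal) ≤ diniUpper f x)
    (hg : ContinuousOn g (Icc a b))
    (hg' : ∀ x ∈ Ico a b, HasDerivWithinAt g (ψ (g x) x) (Ici x) x)
    (ha : g a ≤ f a) : ∀ x ∈ Icc a b, g x ≤ f x := by
  have hneg := le_of_diniLower_le_of_hasDerivAt (ψ := fun s t => -ψ (-s) t)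
    (ψ' := fun s t => ψ' (-s) t) (f := fun x => -f x) (g := fun x => -g x)
    (fun s t ht => by
      have := ((hψ (-s) t ht).comp s (hasDerivAt_neg s)).neg
      rwa [mul_neg_one, neg_neg] at this)
    (hψ'.comp (continuous_neg.prodMap continuous_id).continuousOn fun p hp => ⟨mem_univ _, hp.2⟩)
    hf.neg (fun x hx => by
      rw [diniLower_neg, neg_neg, EReal.coe_neg, EReal.neg_le_neg_iff]
      exact hf' x hx)
    hg.neg (fun x hx => by rw [neg_neg]; exact (hg' x hx).neg) (neg_le_neg ha)
  exact fun x hx => neg_le_neg_iff.1 (hneg x hx)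

lemma Icc_subset_setOf_lt {T : EReal} {b : ℝ} (hb : (b : EReal) < T) :
    Icc 0 b ⊆ {t : ℝ | 0 ≤ t ∧ (t : EReal) < T} :=
  fun _ ht => ⟨ht.1, (EReal.coe_le_coe_iff.2 ht.2).trans_lt hb⟩

lemma setOf_lt_mem_nhdsGE {T : EReal} {x : ℝ} (hx₀ : 0 ≤ x) (hx : (x : EReal) < T) :
    {t : ℝ | 0 ≤ t ∧ (t : EReal) < T} ∈ 𝓝[≥] x := by
  have hopen : IsOpen {t : ℝ | (t : EReal) < T} := isOpen_Iio.preimage continuous_coe_real_ereal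
  filter_upwards [self_mem_nhdsWithin, mem_nhdsWithin_of_mem_nhds (hopen.mem_nhds hx)]
    with t ht htT using ⟨hx₀.trans ht, htT⟩

theorem le_and_le_of_diniLower_le_of_le_diniUpper {Tl Ts : EReal} (hTsTl : Ts ≤ Tl)
    {ψ ψ' : ℝ → ℝ → ℝ}
    (hψ : ∀ s t : ℝ, 0 ≤ t → (t : EReal) < Tl → HasDerivAt (fun s' => ψ s' t) (ψ' s t) s)
    (hψ' : ContinuousOn (fun p : ℝ × ℝ => ψ' p.1 p.2)
      (univ ×ˢ {t : ℝ | 0 ≤ t ∧ (t : EReal) < Tl}))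
    {W R S : ℝ → ℝ}
    (hWc : ContinuousOn W {t : ℝ | 0 ≤ t ∧ (t : EReal) < Tl})
    (hRc : ContinuousOn R {t : ℝ | 0 ≤ t ∧ (t : EReal) < Tl})
    (hW : ∀ t : ℝ, 0 ≤ t → (t : EReal) < Tl → diniLower W t ≤ ((ψ (W t) t : ℝ) : EReal))
    (hR : ∀ t : ℝ, 0 ≤ t → (t : EReal) < Tl → ((ψ (R t) t : ℝ) : EReal) ≤ diniUpper R t)
    (hS : ∀ t : ℝ, 0 ≤ t → (t : EReal) < Ts →
      HasDerivWithinAt S (ψ (S t) t) {τ : ℝ | 0 ≤ τ ∧ (τ : EReal) < Ts} t)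
    (hWS : W 0 ≤ S 0) (hSR : S 0 ≤ R 0) :
    ∀ t : ℝ, 0 ≤ t → (t : EReal) < Ts → W t ≤ S t ∧ S t ≤ R t := by
  intro b hb₀ hb
  have hIs := Icc_subset_setOf_lt hb
  have hIl := Icc_subset_setOf_lt (hb.trans_le hTsTl)
  have hψb : ∀ s, ∀ t ∈ Icc 0 b, HasDerivAt (fun s' => ψ s' t) (ψ' s t) s :=
    fun s t ht => hψ s t (hIl ht).1 (hIl ht).2
  have hψ'b := hψ'.mono (prod_mono subset_rfl hIl)
  have hSc : ContinuousOn S (Icc 0 b) :=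
    fun x hx => (hS x (hIs hx).1 (hIs hx).2).continuousWithinAt.mono hIs
  have hS' : ∀ x ∈ Ico 0 b, HasDerivWithinAt S (ψ (S x) x) (Ici x) x := fun x hx =>
    have hx' := hIs (Ico_subset_Icc_self hx)
    (hS x hx'.1 hx'.2).mono_of_mem_nhdsWithin (setOf_lt_mem_nhdsGE hx'.1 hx'.2)
  have hb' : b ∈ Icc 0 b := ⟨hb₀, le_rfl⟩
  exact ⟨le_of_diniLower_le_of_hasDerivAt hψb hψ'b (hWc.mono hIl)
      (fun x hx => hW x (hIl (Ico_subset_Icc_self hx)).1 (hIl (Ico_subset_Icc_self hx)).2)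
      hSc hS' hWS b hb',
    le_of_le_diniUpper_of_hasDerivAt hψb hψ'b (hRc.mono hIl)
      (fun x hx => hR x (hIl (Ico_subset_Icc_self hx)).1 (hIl (Ico_subset_Icc_self hx)).2)
      hSc hS' hSR b hb'⟩

theorem eq_of_forall_le_and_le {Tl Ts : EReal} (hTs : 0 < Ts) (hTsTl : Ts ≤ Tl)
    {W R S : ℝ → ℝ}
    (hWc : ContinuousOn W {t : ℝ | 0 ≤ t ∧ (t : EReal) < Tl})
    (hRc : ContinuousOn R {t : ℝ | 0 ≤ t ∧ (t : EReal) < Tl})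
    (hWSR : ∀ t : ℝ, 0 ≤ t → (t : EReal) < Ts → W t ≤ S t ∧ S t ≤ R t)
    (hSmax : Ts ≠ ⊤ → ∀ η : ℝ, 0 < η → (η : EReal) ≤ Ts →
      ¬ ∃ M : ℝ, ∀ t ∈ Ioo (Ts.toReal - η) Ts.toReal, |S t| ≤ M) :
    Ts = Tl := by
  refine hTsTl.eq_or_lt.resolve_right fun hlt => ?_
  induction Ts using EReal.rec with
  | bot => simp at hTs
  | top => simp at hlt
  | coe T =>
    have hT : 0 < T := by exact_mod_cast hTs
    have hI := Icc_subset_setOf_lt hlt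
    obtain ⟨CW, hCW⟩ := isCompact_Icc.exists_bound_of_continuousOn (hWc.mono hI)
    obtain ⟨CR, hCR⟩ := isCompact_Icc.exists_bound_of_continuousOn (hRc.mono hI)
    refine hSmax (EReal.coe_ne_top T) T hT le_rfl ⟨max CW CR, fun t ht => ?_⟩
    rw [EReal.toReal_coe, sub_self] at ht
    obtain ⟨hWS, hSR⟩ := hWSR t ht.1.le (by exact_mod_cast ht.2)
    have hWt := abs_le.1 (hCW t ⟨ht.1.le, ht.2.le⟩)
    have hRt := abs_le.1 (hCR t ⟨ht.1.le, ht.2.le⟩)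
    exact abs_le.2 ⟨by linarith [le_max_left CW CR], by linarith [le_max_right CW CR]⟩

theorem stmt2_general (Tl Ts : EReal) (hTs : 0 < Ts) (hTsTl : Ts ≤ Tl)
    (ψ ψ' : ℝ → ℝ → ℝ) (s₀ : ℝ)
    (hψd : ∀ s : ℝ, ∀ t : ℝ, 0 ≤ t → (t : EReal) < Tl →
      HasDerivAt (fun s' => ψ s' t) (ψ' s t) s)
    (hψ'c : ContinuousOn (fun p : ℝ × ℝ => ψ' p.1 p.2)
      (univ ×ˢ {t : ℝ | 0 ≤ t ∧ (t : EReal) < Tl}))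
    (W R S : ℝ → ℝ)
    (hWc : ContinuousOn W {t : ℝ | 0 ≤ t ∧ (t : EReal) < Tl})
    (hRc : ContinuousOn R {t : ℝ | 0 ≤ t ∧ (t : EReal) < Tl})
    (hW : ∀ t : ℝ, 0 ≤ t → (t : EReal) < Tl → diniLower W t ≤ ((ψ (W t) t : ℝ) : EReal))
    (hW0 : W 0 ≤ s₀)
    (hR : ∀ t : ℝ, 0 ≤ t → (t : EReal) < Tl → ((ψ (R t) t : ℝ) : EReal) ≤ diniUpper R t)
    (hR0 : s₀ ≤ R 0)
    (hS : ∀ t : ℝ, 0 ≤ t → (t : EReal) < Ts →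
      HasDerivWithinAt S (ψ (S t) t) {τ : ℝ | 0 ≤ τ ∧ (τ : EReal) < Ts} t)
    (hS0 : S 0 = s₀)
    (hSmax : Ts ≠ ⊤ → ∀ η : ℝ, 0 < η → (η : EReal) ≤ Ts →
      ¬ ∃ M : ℝ, ∀ t ∈ Ioo (Ts.toReal - η) Ts.toReal, |S t| ≤ M) :
    Ts = Tl ∧ ∀ t : ℝ, 0 ≤ t → (t : EReal) < Tl → W t ≤ S t ∧ S t ≤ R t := by
  have hWSR := le_and_le_of_diniLower_le_of_le_diniUpper hTsTl hψd hψ'c hWc hRc hW hR hS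
    (hS0 ▸ hW0) (hS0 ▸ hR0)
  have hTs_eq := eq_of_forall_le_and_le hTs hTsTl hWc hRc hWSR hSmax
  exact ⟨hTs_eq, hTs_eq ▸ hWSR⟩

/-- Lemma A.3 of the paper: if a lower solution `W` and an upper solution `R` of the
differential inequality exist on all of `[0,Tl)`, then the maximal solution `S` of the
Cauchy problem is global (`Ts = Tl`) and `W ≤ S ≤ R` on `[0,Tl)`. -/
theorem stmt2 (Tl Ts : EReal) (hTl : 0 < Tl) (hTs : 0 < Ts) (hTsTl : Ts ≤ Tl)
    (ψ ψ' : ℝ → ℝ → ℝ) (s₀ : ℝ)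
    (hψc : ContinuousOn (fun p : ℝ × ℝ => ψ p.1 p.2)
      (univ ×ˢ {t : ℝ | 0 ≤ t ∧ (t : EReal) < Tl}))
    (hψd : ∀ s : ℝ, ∀ t : ℝ, 0 ≤ t → (t : EReal) < Tl →
      HasDerivAt (fun s' => ψ s' t) (ψ' s t) s)
    (hψ'c : ContinuousOn (fun p : ℝ × ℝ => ψ' p.1 p.2)
      (univ ×ˢ {t : ℝ | 0 ≤ t ∧ (t : EReal) < Tl}))
    (W R S : ℝ → ℝ)
    (hWc : ContinuousOn W {t : ℝ | 0 ≤ t ∧ (t : EReal) < Tl})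
    (hRc : ContinuousOn R {t : ℝ | 0 ≤ t ∧ (t : EReal) < Tl})
    (hW : ∀ t : ℝ, 0 ≤ t → (t : EReal) < Tl → diniLower W t ≤ ((ψ (W t) t : ℝ) : EReal))
    (hW0 : W 0 ≤ s₀)
    (hR : ∀ t : ℝ, 0 ≤ t → (t : EReal) < Tl → ((ψ (R t) t : ℝ) : EReal) ≤ diniUpper R t)
    (hR0 : s₀ ≤ R 0)
    (hS : ∀ t : ℝ, 0 ≤ t → (t : EReal) < Ts →
      HasDerivWithinAt S (ψ (S t) t) {τ : ℝ | 0 ≤ τ ∧ (τ : EReal) < Ts} t)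
    (hS0 : S 0 = s₀)
    (hSmax : Ts ≠ ⊤ → ∀ η : ℝ, 0 < η → (η : EReal) ≤ Ts →
      ¬ ∃ M : ℝ, ∀ t ∈ Ioo (Ts.toReal - η) Ts.toReal, |S t| ≤ M) :
    Ts = Tl ∧ ∀ t : ℝ, 0 ≤ t → (t : EReal) < Tl → W t ≤ S t ∧ S t ≤ R t :=
  stmt2_general Tl Ts hTs hTsTl ψ ψ' s₀ hψd hψ'c W R S hWc hRc hW hW0 hR hR0 hS hS0 hSmax
end

section
/- Let ν ∈ [0,∞), g ∈ (0,∞), r₀ ∈ [0,∞). Define Tc ∈ (0,+∞] as follows: Tc := +∞ if ν > 0 and r₀ ≤ ν/g; Tc := −(1/ν)·log(1 − ν/(g·r₀)) if ν > 0 and r₀ > ν/g; Tc := 1/(g·r₀) if ν = 0 and r₀ > 0; Tc := +∞ if ν = 0 and r₀ = 0. Then for every t ∈ [0,Tc) one has 1 − g·r₀·e_ν(t) > 0, and the function R : [0,Tc) → [0,∞) defined by R(t) := r₀·e^{−νt}/(1 − g·r₀·e_ν(t)) is C¹, satisfies R(0) = r₀, and satisfies R'(t) = −ν·R(t) + g·R(t)²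 for all t ∈ [0,Tc). -/
/-!
Since `e_ν' = e^{-νt}`, the quotient rule turns `R' = -νR + gR²` into a polynomial identity in
`e^{-νt}`, valid wherever the denominator `1 - g r₀ e_ν(t)` is nonzero. That denominator is positive
before `Tc`: for `ν > 0` one has `e_ν < 1/ν`, which settles `g r₀ ≤ ν`; if `g r₀ > ν`, then
`t < Tc` is exactly `e^{-νt} > 1 - ν/(g r₀)`, i.e. `g r₀ e_ν(t) < 1`.
-/

open Set

/-- `e_ν(t) := (1 − e^{−νt})/ν` for `ν > 0`, and `e_0(t) := t`. -/
noncomputable def eNu (ν t : ℝ) : ℝ :=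
  if ν = 0 then t else (1 - Real.exp (-ν * t)) / ν

/-- The critical time of Lemma 5.1 of the paper. -/
noncomputable def Tc5 (ν g r₀ : ℝ) : EReal :=
  if ν = 0 then
    (if r₀ = 0 then ⊤ else ((1 / (g * r₀) : ℝ) : EReal))
  else if r₀ ≤ ν / g then ⊤
  else ((-(1 / ν) * Real.log (1 - ν / (g * r₀)) : ℝ) : EReal)

lemma eNu_of_ne_zero {ν : ℝ} (hν : ν ≠ 0) (t : ℝ) : eNu ν t = (1 - Real.exp (-ν * t)) / ν :=
  if_neg hν

lemma eNu_zero_right (ν : ℝ) : eNu ν 0 = 0 := by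
  unfold eNu; split_ifs <;> simp

lemma hasDerivAt_eNu (ν t : ℝ) : HasDerivAt (eNu ν) (Real.exp (-ν * t)) t := by
  rcases eq_or_ne ν 0 with rfl | hν
  · rw [show eNu 0 = id from funext fun _ => if_pos rfl]
    simpa using hasDerivAt_id t
  · have hexp : HasDerivAt (fun τ => Real.exp (-ν * τ)) (Real.exp (-ν * t) * -ν) t := by
      simpa using ((hasDerivAt_id t).const_mul (-ν)).exp
    rw [show eNu ν = _ from funext (eNu_of_ne_zero hν)]
    refine ((hexp.const_sub 1).div_const ν).congr_deriv ?_
    rw [div_eq_iff hν]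
    ring

lemma mul_eNu_lt_one_of_le {ν c : ℝ} (hν : 0 < ν) (hc₀ : 0 ≤ c) (hcν : c ≤ ν) (t : ℝ) :
    c * eNu ν t < 1 := by
  have heNu : eNu ν t < 1 / ν := by
    rw [eNu_of_ne_zero hν.ne']
    gcongr
    linarith [Real.exp_pos (-ν * t)]
  rcases hc₀.eq_or_lt with rfl | hc
  · simp
  · calc c * eNu ν t < c * (1 / ν) := by gcongr
      _ ≤ 1 := by rw [mul_one_div, div_le_one hν]; exact hcν

lemma mul_eNu_lt_one_of_lt_log {ν c t : ℝ} (hν : 0 < ν) (hνc : ν < c)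
    (ht : t < -(1 / ν) * Real.log (1 - ν / c)) : c * eNu ν t < 1 := by
  have hc : 0 < c := hν.trans hνc
  have hlog : Real.log (1 - ν / c) < -ν * t := by
    have := mul_lt_mul_of_pos_left ht hν
    rw [show ν * (-(1 / ν) * Real.log (1 - ν / c)) = -Real.log (1 - ν / c) by field_simp] at this
    linarith
  have hexp : 1 - ν / c < Real.exp (-ν * t) :=
    (Real.log_lt_iff_lt_exp (by rw [sub_pos, div_lt_one hc]; exact hνc)).mp hlog
  rw [eNu_of_ne_zero hν.ne', mul_div_assoc', div_lt_one hν]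
  rw [sub_lt_comm, lt_div_iff₀ hc] at hexp
  linarith

lemma one_sub_mul_eNu_pos {ν g r₀ t : ℝ} (hν : 0 ≤ ν) (hg : 0 < g) (hr : 0 ≤ r₀)
    (ht : (t : EReal) < Tc5 ν g r₀) : 0 < 1 - g * r₀ * eNu ν t := by
  rw [sub_pos]
  unfold Tc5 at ht
  split_ifs at ht with hν₀ hr₀ hcrit
  · simp [hr₀]
  · have hc : 0 < g * r₀ := mul_pos hg (hr.lt_of_ne' hr₀)
    rw [hν₀, eNu, if_pos rfl, mul_comm, ← lt_div_iff₀ hc]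
    exact_mod_cast ht
  · exact mul_eNu_lt_one_of_le (hν.lt_of_ne' hν₀) (by positivity)
      (by rwa [le_div_iff₀ hg, mul_comm] at hcrit) t
  · refine mul_eNu_lt_one_of_lt_log (hν.lt_of_ne' hν₀) ?_ (EReal.coe_lt_coe_iff.mp ht)
    rwa [not_le, div_lt_iff₀ hg, mul_comm] at hcrit

/-- The function `R` of the paper. -/
noncomputable def controlSolution (ν g r₀ t : ℝ) : ℝ :=
  r₀ * Real.exp (-ν * t) / (1 - g * r₀ * eNu ν t)

lemma hasDerivAt_controlSolution {ν g r₀ t : ℝ} (hden : 1 - g * r₀ * eNu ν t ≠ 0) :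
    HasDerivAt (controlSolution ν g r₀)
      (-ν * controlSolution ν g r₀ t + g * controlSolution ν g r₀ t ^ 2) t := by
  have hnum : HasDerivAt (fun τ => r₀ * Real.exp (-ν * τ)) (r₀ * (Real.exp (-ν * t) * -ν)) t := by
    simpa using (((hasDerivAt_id t).const_mul (-ν)).exp).const_mul r₀
  have hdenom := ((hasDerivAt_eNu ν t).const_mul (g * r₀)).const_sub 1
  refine (hnum.div hdenom hden).congr_deriv ?_
  simp only [controlSolution]
  field_simp
  ring

/-- Lemma 5.1(ii) of the paper: the explicit solution
`R(t) = r₀ e^{−νt}/(1 − g r₀ e_ν(t))` of the control equation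
`R' = −νR + gR²`, `R(0) = r₀`, on `[0,Tc)`. -/
theorem stmt5 (ν g r₀ : ℝ) (hν : 0 ≤ ν) (hg : 0 < g) (hr : 0 ≤ r₀) :
    (∀ t : ℝ, 0 ≤ t → (t : EReal) < Tc5 ν g r₀ → 0 < 1 - g * r₀ * eNu ν t) ∧
    r₀ * Real.exp (-ν * 0) / (1 - g * r₀ * eNu ν 0) = r₀ ∧
    (∀ t : ℝ, 0 ≤ t → (t : EReal) < Tc5 ν g r₀ →
      0 ≤ r₀ * Real.exp (-ν * t) / (1 - g * r₀ * eNu ν t) ∧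
      HasDerivWithinAt (fun τ => r₀ * Real.exp (-ν * τ) / (1 - g * r₀ * eNu ν τ))
        (-ν * (r₀ * Real.exp (-ν * t) / (1 - g * r₀ * eNu ν t))
          + g * (r₀ * Real.exp (-ν * t) / (1 - g * r₀ * eNu ν t)) ^ 2)
        {τ : ℝ | 0 ≤ τ ∧ (τ : EReal) < Tc5 ν g r₀} t) := by
  refine ⟨fun t _ ht => one_sub_mul_eNu_pos hν hg hr ht, by simp [eNu_zero_right], fun t _ ht => ?_⟩
  have hden := one_sub_mul_eNu_pos hν hg hr ht
  exact ⟨div_nonneg (mul_nonneg hr (Real.exp_pos _).le) hden.le,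
    (hasDerivAt_controlSolution hden.ne').hasDerivWithinAt⟩
end

section
/- Fix an integer d ≥ 2, ν ∈ [0,∞), T ∈ (0,+∞], and a finite set G ⊂ ℤ^d∖{0} with G = −G. Let f_k : [0,T) → ℂ^d (k ∈ G) be continuous, and let γ = (γ_k)_{k∈G} be a C¹ solution on [0,T) of the Galerkin component system dγ_k/dt = −ν|k|²γ_k − i(2π)^{−d/2} ∑_{h∈G} (γ_h·(k−h))·P_k γ_{k−h} + f_k (k ∈ G, γ_j := 0 for j ∉ G) such that for every t ∈ [0,T) and k ∈ G one has conj(γ_k(t)) = γ_{−k}(t) and k·γ_k(t) = 0. Then the function t ↦ ∑_{k∈G} |γ_k(t)|² is differentiable on [0,T) and satisfies the energy balance equation d/dt ∑_{k∈G} |γ_k(t)|² = −2ν ∑_{k∈G} |k|²·|γ_k(t)|² + 2 ∑_{k∈G} Re( ∑_{r=1}^d conj(f_{k,r}(t))·γ_{k,r}(t) ) for every t ∈ [0,T). -/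
open Filter Set Finset

/-- `k·c := ∑_r k_r c_r` (no complex conjugation). -/
noncomputable def zcDot {d : ℕ} (k : Fin d → ℤ) (c : Fin d → ℂ) : ℂ := ∑ r, (k r : ℂ) * c r

/-- `|k|²`, the squared Euclidean norm of `k ∈ ℤ^d`. -/
def zNormSq {d : ℕ} (k : Fin d → ℤ) : ℤ := ∑ r, (k r) ^ 2

/-- `P_k c := c − (k·c)·k/|k|²`, the projection of `ℂ^d` onto the orthogonal
complement of `k`. -/
noncomputable def projPerp {d : ℕ} (k : Fin d → ℤ) (c : Fin d → ℂ) : Fin d → ℂ :=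
  fun r => c r - zcDot k c * (k r : ℂ) / (zNormSq k : ℂ)

/-- The right-hand side of the Galerkin component system:
`−ν|k|²γ_k − i(2π)^{−d/2} ∑_{h∈G} (γ_h·(k−h))·P_k γ_{k−h} + f_k`. -/
noncomputable def galRHS (d : ℕ) (ν : ℝ) (G : Finset (Fin d → ℤ))
    (f : (Fin d → ℤ) → ℝ → Fin d → ℂ) (γ : (Fin d → ℤ) → ℝ → Fin d → ℂ)
    (k : Fin d → ℤ) (t : ℝ) : Fin d → ℂ :=
  fun r =>
    -((ν : ℂ) * (zNormSq k : ℂ)) * γ k t r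
      - Complex.I * (((2 * Real.pi) ^ (-(d : ℝ) / 2) : ℝ) : ℂ) *
        ∑ h ∈ G, zcDot (k - h) (γ h t) * projPerp k (γ (k - h) t) r
      + f k t r

/-!
Differentiating `∑ₖ |γₖ|²` along the system gives `2 Re ∑ₖ conj γₖ · γₖ'`. The viscous and forcing
terms produce the right-hand side directly. In the nonlinear term `conj γₖ = γ₋ₖ` is orthogonal to
`k`, so `Pₖ` can be dropped, and for each fixed `h` (using `h · γₕ = 0`) the reflection
`k ↦ h - k` reverses the sign of `((k - h) · γₕ) (γ₋ₖ · γₖ₋ₕ)`, so the cubic sum vanishes.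
-/

open Matrix

lemma zcDot_sub_left {d : ℕ} (k h : Fin d → ℤ) (c : Fin d → ℂ) :
    zcDot (k - h) c = zcDot k c - zcDot h c := by
  simp [zcDot, sub_mul, Finset.sum_sub_distrib]

lemma zcDot_neg_left {d : ℕ} (k : Fin d → ℤ) (c : Fin d → ℂ) :
    zcDot (-k) c = -zcDot k c := by
  simp [zcDot, Finset.sum_neg_distrib]

lemma dotProduct_projPerp {d : ℕ} {k : Fin d → ℤ} {w : Fin d → ℂ} (hw : zcDot k w = 0)
    (c : Fin d → ℂ) : w ⬝ᵥ projPerp k c = w ⬝ᵥ c := by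
  have hkw : ∑ r, w r * (k r : ℂ) = 0 := by
    rw [← hw, zcDot]; exact Finset.sum_congr rfl fun r _ => mul_comm _ _
  have hterm : ∀ r, w r * projPerp k c r = w r * c r - zcDot k c / zNormSq k * (w r * k r) :=
    fun r => by rw [projPerp]; ring
  simp only [dotProduct, hterm, Finset.sum_sub_distrib, ← Finset.mul_sum, hkw, mul_zero, sub_zero]

lemma finsetSum_eq_zero_of_comp_equiv_eq_neg {α β : Type*} [AddCommGroup β] [IsAddTorsionFree β]
    {f : α → β} {s : Finset α} (hs : Function.support f ⊆ s) (e : α ≃ α)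
    (hf : ∀ a, f (e a) = -f a) : ∑ a ∈ s, f a = 0 := by
  rw [← finsum_eq_finsetSum_of_support_subset f hs, ← neg_eq_self, ← finsum_neg_distrib]
  simp only [← hf]
  exact finsum_comp_equiv e

lemma sum_zcDot_sub_mul_dotProduct_eq_zero {d : ℕ} {G : Finset (Fin d → ℤ)}
    (hGsym : ∀ k ∈ G, -k ∈ G) {u : (Fin d → ℤ) → Fin d → ℂ} (hu : ∀ j ∉ G, u j = 0)
    {h : Fin d → ℤ} (hh : zcDot h (u h) = 0) :
    ∑ k ∈ G, zcDot (k - h) (u h) * (u (-k) ⬝ᵥ u (k - h)) = 0 := by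
  refine finsetSum_eq_zero_of_comp_equiv_eq_neg (fun k hk => ?_) (Equiv.subLeft h) fun k => ?_
  · by_contra hkG
    have hnegk : -k ∉ G := fun h' => hkG (by simpa using hGsym _ h')
    exact hk (by simp [hu _ hnegk])
  · simp only [Equiv.subLeft_apply, sub_sub_cancel_left, neg_sub, zcDot_neg_left,
      zcDot_sub_left k, hh, sub_zero, dotProduct_comm (u (k - h))]
    ring

lemma sum_sum_zcDot_sub_mul_dotProduct_projPerp_eq_zero {d : ℕ} {G : Finset (Fin d → ℤ)}
    (hGsym : ∀ k ∈ G, -k ∈ G) {u : (Fin d → ℤ) → Fin d → ℂ} (hu : ∀ j ∉ G, u j = 0)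
    (hdiv : ∀ k ∈ G, zcDot k (u k) = 0) :
    ∑ k ∈ G, ∑ h ∈ G, zcDot (k - h) (u h) * (u (-k) ⬝ᵥ projPerp k (u (k - h))) = 0 := by
  have hperp : ∀ k ∈ G, zcDot k (u (-k)) = 0 := fun k hk => by
    simpa [zcDot_neg_left] using hdiv _ (hGsym k hk)
  rw [Finset.sum_congr rfl fun k hk => Finset.sum_congr rfl fun h _ => by
    rw [dotProduct_projPerp (hperp k hk)], Finset.sum_comm]
  exact Finset.sum_eq_zero fun h hh => sum_zcDot_sub_mul_dotProduct_eq_zero hGsym hu (hdiv h hh)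

lemma HasDerivWithinAt.sum_normSq {ι : Type*} [Fintype ι] {v : ℝ → ι → ℂ} {v' : ι → ℂ}
    {s : Set ℝ} {t : ℝ} (hv : HasDerivWithinAt v v' s t) :
    HasDerivWithinAt (fun τ => ∑ r, Complex.normSq (v τ r)) (2 * (star (v t) ⬝ᵥ v').re) s t := by
  simp only [Complex.normSq_eq_norm_sq, dotProduct, Complex.re_sum, Finset.mul_sum]
  refine HasDerivWithinAt.fun_sum fun r _ => ?_
  refine (hasDerivWithinAt_pi.mp hv r).norm_sq.congr_deriv ?_
  rw [Complex.inner, mul_comm (v' r), Pi.star_apply, Complex.star_def]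

lemma dotProduct_galRHS {d : ℕ} (ν : ℝ) (G : Finset (Fin d → ℤ))
    (f γ : (Fin d → ℤ) → ℝ → Fin d → ℂ) (k : Fin d → ℤ) (t : ℝ) (w : Fin d → ℂ) :
    w ⬝ᵥ galRHS d ν G f γ k t
      = -(ν * zNormSq k) * (w ⬝ᵥ γ k t)
        - Complex.I * ((2 * Real.pi) ^ (-(d : ℝ) / 2) : ℝ) *
          ∑ h ∈ G, zcDot (k - h) (γ h t) * (w ⬝ᵥ projPerp k (γ (k - h) t))
        + w ⬝ᵥ f k t := by
  simp only [dotProduct, galRHS, mul_add, mul_sub, Finset.sum_add_distrib, Finset.sum_sub_distrib,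
    Finset.mul_sum]
  rw [Finset.sum_comm]
  congr 2
  · exact Finset.sum_congr rfl fun r _ => by ring
  · exact Finset.sum_congr rfl fun h _ => Finset.sum_congr rfl fun r _ => by ring

lemma star_dotProduct_self {ι : Type*} [Fintype ι] (v : ι → ℂ) :
    star v ⬝ᵥ v = ((∑ r, Complex.normSq (v r) : ℝ) : ℂ) := by
  simp [dotProduct, Complex.normSq_eq_conj_mul_self]

lemma re_star_dotProduct_comm {ι : Type*} [Fintype ι] (v w : ι → ℂ) :
    (star v ⬝ᵥ w).re = (star w ⬝ᵥ v).re := by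
  simp only [dotProduct, Complex.re_sum, Pi.star_apply, Complex.star_def, Complex.mul_re,
    Complex.conj_re, Complex.conj_im]
  exact Finset.sum_congr rfl fun r _ => by ring

lemma sum_re_star_dotProduct_galRHS {d : ℕ} (ν : ℝ) {G : Finset (Fin d → ℤ)}
    (hGsym : ∀ k ∈ G, -k ∈ G) (f : (Fin d → ℤ) → ℝ → Fin d → ℂ)
    {γ : (Fin d → ℤ) → ℝ → Fin d → ℂ} {t : ℝ} (hγ0 : ∀ j ∉ G, γ j t = 0)
    (hconj : ∀ k ∈ G, star (γ k t) = γ (-k) t) (hdiv : ∀ k ∈ G, zcDot k (γ k t) = 0) :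
    ∑ k ∈ G, (star (γ k t) ⬝ᵥ galRHS d ν G f γ k t).re
      = -ν * ∑ k ∈ G, (zNormSq k : ℝ) * ∑ r, Complex.normSq (γ k t r)
        + ∑ k ∈ G, (star (f k t) ⬝ᵥ γ k t).re := by
  set c : ℂ := Complex.I * ((2 * Real.pi) ^ (-(d : ℝ) / 2) : ℝ)
  have hterm : ∀ k ∈ G, star (γ k t) ⬝ᵥ galRHS d ν G f γ k t
      = ((-ν * ((zNormSq k : ℝ) * ∑ r, Complex.normSq (γ k t r)) : ℝ) : ℂ)
        - c * ∑ h ∈ G, zcDot (k - h) (γ h t) * (γ (-k) t ⬝ᵥ projPerp k (γ (k - h) t))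
        + star (γ k t) ⬝ᵥ f k t := fun k hk => by
    rw [dotProduct_galRHS, star_dotProduct_self, hconj k hk]
    push_cast
    ring
  have hnonlinear := sum_sum_zcDot_sub_mul_dotProduct_projPerp_eq_zero hGsym hγ0 hdiv
  rw [← Complex.re_sum, Finset.sum_congr rfl hterm, Finset.sum_add_distrib, Finset.sum_sub_distrib,
    ← Finset.mul_sum, hnonlinear, mul_zero, sub_zero, Complex.add_re, Complex.re_sum,
    Complex.re_sum, Finset.mul_sum]
  simp only [Complex.ofReal_re, re_star_dotProduct_comm (γ _ t)]

theorem stmt11_general (d : ℕ) (ν : ℝ) (T : EReal)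
    (G : Finset (Fin d → ℤ)) (hGsym : ∀ k ∈ G, -k ∈ G)
    (f : (Fin d → ℤ) → ℝ → Fin d → ℂ)
    (γ : (Fin d → ℤ) → ℝ → Fin d → ℂ)
    (hγ0 : ∀ j, j ∉ G → ∀ t : ℝ, γ j t = 0)
    (hODE : ∀ k ∈ G, ∀ t : ℝ, 0 ≤ t → (t : EReal) < T →
      HasDerivWithinAt (γ k) (galRHS d ν G f γ k t) {τ : ℝ | 0 ≤ τ ∧ (τ : EReal) < T} t)
    (hconj : ∀ k ∈ G, ∀ t : ℝ, 0 ≤ t → (t : EReal) < T →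
      ∀ r, (starRingEnd ℂ) (γ k t r) = γ (-k) t r)
    (hdiv : ∀ k ∈ G, ∀ t : ℝ, 0 ≤ t → (t : EReal) < T → zcDot k (γ k t) = 0) :
    ∀ t : ℝ, 0 ≤ t → (t : EReal) < T →
      HasDerivWithinAt (fun τ => ∑ k ∈ G, ∑ r, Complex.normSq (γ k τ r))
        (-2 * ν * ∑ k ∈ G, (zNormSq k : ℝ) * ∑ r, Complex.normSq (γ k t r)
          + 2 * ∑ k ∈ G, (∑ r, (starRingEnd ℂ) (f k t r) * γ k t r).re)
        {τ : ℝ | 0 ≤ τ ∧ (τ : EReal) < T} t := by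
  intro t ht hT
  have henergy := sum_re_star_dotProduct_galRHS ν hGsym f (fun j hj => hγ0 j hj t)
    (fun k hk => funext (hconj k hk t ht hT)) (fun k hk => hdiv k hk t ht hT)
  have hderiv := HasDerivWithinAt.fun_sum fun k hk => (hODE k hk t ht hT).sum_normSq
  refine hderiv.congr_deriv ?_
  rw [← Finset.mul_sum, henergy]
  simp only [dotProduct, Pi.star_apply, Complex.star_def]
  ring

/-- Energy balance equation for the Galerkin approximant (Step 1 of Appendix B of
the paper): the cubic contribution of the nonlinearity vanishes and
`d/dt ∑_k |γ_k|² = −2ν ∑_k |k|²|γ_k|² + 2 ∑_k Re⟨f_k, γ_k⟩`. -/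
theorem stmt11 (d : ℕ) (hd : 2 ≤ d) (ν : ℝ) (hν : 0 ≤ ν) (T : EReal) (hT : 0 < T)
    (G : Finset (Fin d → ℤ)) (hG0 : (0 : Fin d → ℤ) ∉ G) (hGsym : ∀ k ∈ G, -k ∈ G)
    (f : (Fin d → ℤ) → ℝ → Fin d → ℂ)
    (hfc : ∀ k ∈ G, ContinuousOn (f k) {t : ℝ | 0 ≤ t ∧ (t : EReal) < T})
    (γ : (Fin d → ℤ) → ℝ → Fin d → ℂ)
    (hγ0 : ∀ j, j ∉ G → ∀ t : ℝ, γ j t = 0)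
    (hODE : ∀ k ∈ G, ∀ t : ℝ, 0 ≤ t → (t : EReal) < T →
      HasDerivWithinAt (γ k) (galRHS d ν G f γ k t) {τ : ℝ | 0 ≤ τ ∧ (τ : EReal) < T} t)
    (hconj : ∀ k ∈ G, ∀ t : ℝ, 0 ≤ t → (t : EReal) < T →
      ∀ r, (starRingEnd ℂ) (γ k t r) = γ (-k) t r)
    (hdiv : ∀ k ∈ G, ∀ t : ℝ, 0 ≤ t → (t : EReal) < T → zcDot k (γ k t) = 0) :
    ∀ t : ℝ, 0 ≤ t → (t : EReal) < T →
      HasDerivWithinAt (fun τ => ∑ k ∈ G, ∑ r, Complex.normSq (γ k τ r))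
        (-2 * ν * ∑ k ∈ G, (zNormSq k : ℝ) * ∑ r, Complex.normSq (γ k t r)
          + 2 * ∑ k ∈ G, (∑ r, (starRingEnd ℂ) (f k t r) * γ k t r).re)
        {τ : ℝ | 0 ≤ τ ∧ (τ : EReal) < T} t :=
  stmt11_general d ν T G hGsym f γ hγ0 hODE hconj hdiv
end

section
/- Fix an integer d ≥ 2, ν ∈ [0,∞), T ∈ (0,+∞], and a finite set G ⊂ ℤ^d∖{0} with G = −G. Let f_k : [0,T) → ℂ^d (k ∈ G) be continuous, and let γ = (γ_k)_{k∈G} be a C¹ solution on [0,T) of the Galerkin component system dγ_k/dt = −ν|k|²γ_k − i(2π)^{−d/2} ∑_{h∈G} (γ_h·(k−h))·P_k γ_{k−h} + f_k (k ∈ G, γ_j := 0 for j ∉ G) such that for every t ∈ [0,T) and k ∈ G one has conj(γ_k(t)) = γ_{−k}(t) and k·γ_k(t) = 0. Then for every t ∈ [0,T): √(∑_{k∈G} |γ_k(t)|²) ≤ ( √(∑_{k∈G} |γ_k(0)|²) + ∫₀ᵗ e^{νs} √(∑_{k∈G} |f_k(s)|²) ds ) · e^{−νt}. -/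
open Filter Set Finset

open Matrix Topology

/-! The energy `E = ∑ |γ_k|²` satisfies `E' = 2 Re ∑ conj γ_k · γ_k'`, and the transport term
contributes nothing to it: by `conj γ_k = γ_{-k}` and `k · γ_{-k} = 0` the projection `P_k` is
invisible, and what remains is a sum of triads that cancel in pairs. Since `|k| ≥ 1` on `G`,
`E' ≤ -2νE + 2 √E ‖f‖` by Cauchy–Schwarz, i.e. `(e^{νt} √E)' ≤ e^{νt} ‖f‖`; integrating this
comparison gives the bound. -/

theorem hasDerivWithinAt_integral_Ici_of_continuousOn {h : ℝ → ℝ} {a b x : ℝ}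
    (hh : ContinuousOn h (Icc a b)) (hx : x ∈ Ico a b) :
    HasDerivWithinAt (fun u => ∫ t in a..u, h t) (h x) (Ici x) x := by
  have hxI : x ∈ Icc a b := Ico_subset_Icc_self hx
  have : Fact (x ∈ Icc a b) := ⟨hxI⟩
  have hint : IntervalIntegrable h MeasureTheory.volume a x :=
    (hh.mono (Icc_subset_Icc_right hx.2.le)).intervalIntegrable_of_Icc hx.1
  exact (intervalIntegral.integral_hasDerivWithinAt_right hint
    (hh.stronglyMeasurableAtFilter_nhdsWithin measurableSet_Icc x)
    (hh x hxI)).mono_of_mem_nhdsWithin (Icc_mem_nhdsGE_of_mem hx)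

theorem sqrt_le_sqrt_add_integral_of_deriv_le {M M' h : ℝ → ℝ} {a b : ℝ} (hab : a ≤ b)
    (hM : ContinuousOn M (Icc a b))
    (hM' : ∀ x ∈ Ico a b, HasDerivWithinAt M (M' x) (Icc a b) x)
    (hM0 : ∀ x ∈ Icc a b, 0 ≤ M x) (hh : ContinuousOn h (Icc a b))
    (hh0 : ∀ x ∈ Icc a b, 0 ≤ h x) (bound : ∀ x ∈ Ico a b, M' x ≤ 2 * √(M x) * h x) :
    √(M b) ≤ √(M a) + ∫ x in a..b, h x := by
  -- `√` is not differentiable at `0`: run the comparison for `√(M + ε)` and let `ε → 0`.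
  have hperturbed : ∀ ε > 0, √(M b + ε) ≤ √(M a + ε) + ∫ x in a..b, h x := by
    intro ε hε
    have hpos : ∀ x ∈ Icc a b, 0 < M x + ε := fun x hx => by linarith [hM0 x hx]
    have hprim : ContinuousOn (fun u => ∫ x in a..u, h x) (Icc a b) := by
      rw [← uIcc_of_le hab] at hh ⊢
      exact intervalIntegral.continuousOn_primitive_interval hh.integrableOn_uIcc
    refine image_le_of_deriv_right_le_deriv_boundary (f := fun x => √(M x + ε))
      (B := fun u => √(M a + ε) + ∫ x in a..u, h x) (hM.add continuousOn_const).sqrt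
      (fun x hx => (((hM' x hx).add_const ε).sqrt (hpos x (Ico_subset_Icc_self hx)).ne'
        ).mono_of_mem_nhdsWithin (Icc_mem_nhdsGE_of_mem hx)) (by simp)
      (continuousOn_const.add hprim)
      (fun x hx => (hasDerivWithinAt_integral_Ici_of_continuousOn hh hx).const_add _)
      (fun x hx => ?_) (right_mem_Icc.2 hab)
    have hxI := Ico_subset_Icc_self hx
    rw [div_le_iff₀ (by have := hpos x hxI; positivity)]
    calc M' x ≤ 2 * √(M x) * h x := bound x hx
      _ ≤ 2 * √(M x + ε) * h x := by
        gcongr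
        · exact hh0 x hxI
        · linarith
      _ = h x * (2 * √(M x + ε)) := by ring
  have hlim : Tendsto (fun ε => √(M a + ε) + ∫ x in a..b, h x) (𝓝[>] 0)
      (𝓝 (√(M a) + ∫ x in a..b, h x)) := by
    have : Continuous (fun ε => √(M a + ε) + ∫ x in a..b, h x) := by fun_prop
    simpa using this.tendsto 0 |>.mono_left nhdsWithin_le_nhds
  refine ge_of_tendsto hlim (eventually_nhdsWithin_of_forall fun ε hε => ?_)
  exact (Real.sqrt_le_sqrt (by linarith [mem_Ioi.1 hε])).trans (hperturbed ε hε)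

theorem sqrt_le_of_deriv_le_dissipative {E E' F : ℝ → ℝ} {ν a b : ℝ} (hab : a ≤ b)
    (hE : ContinuousOn E (Icc a b))
    (hE' : ∀ x ∈ Ico a b, HasDerivWithinAt E (E' x) (Icc a b) x)
    (hE0 : ∀ x ∈ Icc a b, 0 ≤ E x) (hF : ContinuousOn F (Icc a b))
    (hF0 : ∀ x ∈ Icc a b, 0 ≤ F x)
    (bound : ∀ x ∈ Ico a b, E' x ≤ -2 * ν * E x + 2 * √(E x) * F x) :
    √(E b) ≤ (Real.exp (ν * a) * √(E a) + ∫ x in a..b, Real.exp (ν * x) * F x) *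
      Real.exp (-ν * b) := by
  have hexp : ∀ x, Real.exp (2 * ν * x) = Real.exp (ν * x) ^ 2 := fun x => by
    rw [← Real.exp_nat_mul]; ring_nf
  have hsqrt : ∀ x, √(Real.exp (2 * ν * x) * E x) = Real.exp (ν * x) * √(E x) := fun x => by
    rw [Real.sqrt_mul (Real.exp_pos _).le, hexp, Real.sqrt_sq (Real.exp_pos _).le]
  have hexpd : ∀ x, HasDerivAt (fun x => Real.exp (2 * ν * x)) (Real.exp (2 * ν * x) * (2 * ν)) x :=
    fun x => by simpa using ((hasDerivAt_id x).const_mul (2 * ν)).exp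
  have hweighted := sqrt_le_sqrt_add_integral_of_deriv_le (M := fun x => Real.exp (2 * ν * x) * E x)
    (M' := fun x => Real.exp (2 * ν * x) * (2 * ν) * E x + Real.exp (2 * ν * x) * E' x)
    (h := fun x => Real.exp (ν * x) * F x) hab (by fun_prop)
    (fun x hx => (hexpd x).hasDerivWithinAt.mul (hE' x hx))
    (fun x hx => mul_nonneg (Real.exp_pos _).le (hE0 x hx)) (by fun_prop)
    (fun x hx => mul_nonneg (Real.exp_pos _).le (hF0 x hx)) fun x hx => by
      calc Real.exp (2 * ν * x) * (2 * ν) * E x + Real.exp (2 * ν * x) * E' x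
          = Real.exp (2 * ν * x) * (E' x + 2 * ν * E x) := by ring
        _ ≤ Real.exp (2 * ν * x) * (2 * √(E x) * F x) := by
          gcongr; linarith [bound x hx]
        _ = 2 * √(Real.exp (2 * ν * x) * E x) * (Real.exp (ν * x) * F x) := by
          rw [hsqrt, hexp]; ring
  rw [hsqrt, hsqrt] at hweighted
  rw [neg_mul, Real.exp_neg, ← div_eq_mul_inv, le_div_iff₀ (Real.exp_pos _), mul_comm]
  exact hweighted

section GalerkinAlgebra

variable {d : ℕ}

lemma zcDot_add (a b : Fin d → ℤ) (c : Fin d → ℂ) : zcDot (a + b) c = zcDot a c + zcDot b c := by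
  simp [zcDot, add_mul, sum_add_distrib]

lemma zcDot_neg (a : Fin d → ℤ) (c : Fin d → ℂ) : zcDot (-a) c = -zcDot a c := by
  simp [zcDot]

lemma dotProduct_projPerp_of_zcDot_eq_zero {k : Fin d → ℤ} {a : Fin d → ℂ} (ha : zcDot k a = 0)
    (c : Fin d → ℂ) : a ⬝ᵥ projPerp k c = a ⬝ᵥ c := by
  have hka : ∑ r, a r * k r = 0 := by simpa [zcDot, mul_comm] using ha
  simp only [dotProduct, projPerp, mul_sub, sum_sub_distrib]
  rw [sub_eq_self]
  calc ∑ r, a r * (zcDot k c * k r / zNormSq k)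
      = zcDot k c / zNormSq k * ∑ r, a r * k r := by
        rw [mul_sum]; exact sum_congr rfl fun r _ => by ring
    _ = 0 := by rw [hka, mul_zero]

/-- Reindexing `k ↦ h - k` pairs the terms off into opposites, because `(k - h) + (-k) = -h`
and `c h` is orthogonal to `h`. -/
lemma sum_triad_eq_zero {G : Finset (Fin d → ℤ)} (hGsym : ∀ k ∈ G, -k ∈ G)
    {c : (Fin d → ℤ) → Fin d → ℂ} (hc : ∀ j ∉ G, c j = 0) {h : Fin d → ℤ}
    (hh : zcDot h (c h) = 0) :
    ∑ k ∈ G, zcDot (k - h) (c h) * (c (k - h) ⬝ᵥ c (-k)) = 0 := by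
  set T : (Fin d → ℤ) → ℂ := fun k => zcDot (k - h) (c h) * (c (k - h) ⬝ᵥ c (-k))
  have hsupp : Function.support T ⊆ G := by
    intro k hk
    by_contra hkG
    have : c (-k) = 0 := hc _ fun hk' => hkG (by simpa using hGsym _ hk')
    simp [T, this] at hk
  have hpair : ∀ k, T k + T (h - k) = 0 := by
    intro k
    have hsum : zcDot (k - h) (c h) + zcDot (-k) (c h) = 0 := by
      rw [← zcDot_add, show k - h + -k = -h by abel, zcDot_neg, hh, neg_zero]
    simp only [T, show h - k - h = -k by abel, neg_sub, dotProduct_comm (c (-k))]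
    linear_combination (c (k - h) ⬝ᵥ c (-k)) * hsum
  have hfin : (Function.support T).Finite := G.finite_toSet.subset hsupp
  have hfin' : (Function.support fun k => T (h - k)).Finite :=
    hfin.preimage (sub_right_injective).injOn
  have hreflect : ∑ᶠ k, T (h - k) = ∑ᶠ k, T k := finsum_comp_equiv (Equiv.subLeft h)
  have hzero : ∑ᶠ k, T k + ∑ᶠ k, T (h - k) = 0 := by
    simp [← finsum_add_distrib hfin hfin', hpair]
  rw [← finsum_eq_sum_of_support_subset T hsupp]
  linear_combination hzero / 2 - hreflect / 2

lemma one_le_zNormSq {d : ℕ} {k : Fin d → ℤ} (hk : k ≠ 0) : 1 ≤ zNormSq k := by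
  obtain ⟨r, hr⟩ := Function.ne_iff.1 hk
  replace hr : k r ≠ 0 := hr
  have hpos : 0 < k r ^ 2 := by positivity
  exact hpos.trans_le (single_le_sum (fun i _ => sq_nonneg (k i)) (mem_univ r))

end GalerkinAlgebra

section GalerkinEnergy

variable {d : ℕ} (G : Finset (Fin d → ℤ))

def l2NormSq (c : (Fin d → ℤ) → Fin d → ℂ) : ℝ := ∑ k ∈ G, ∑ r, Complex.normSq (c k r)

def l2Inner (a b : (Fin d → ℤ) → Fin d → ℂ) : ℝ := ∑ k ∈ G, (star (a k) ⬝ᵥ b k).re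

lemma l2NormSq_nonneg (c : (Fin d → ℤ) → Fin d → ℂ) : 0 ≤ l2NormSq G c :=
  sum_nonneg fun _ _ => sum_nonneg fun _ _ => Complex.normSq_nonneg _

lemma l2Inner_le_sqrt_mul_sqrt (a b : (Fin d → ℤ) → Fin d → ℂ) :
    l2Inner G a b ≤ √(l2NormSq G a) * √(l2NormSq G b) := by
  have hflat : ∀ c : (Fin d → ℤ) → Fin d → ℂ,
      l2NormSq G c = ∑ p ∈ G ×ˢ (univ : Finset (Fin d)), ‖c p.1 p.2‖ ^ 2 := fun c => by
    simp only [l2NormSq, sum_product, Complex.sq_norm]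
  calc l2Inner G a b = ∑ p ∈ G ×ˢ (univ : Finset (Fin d)), (star (a p.1 p.2) * b p.1 p.2).re := by
        simp only [l2Inner, sum_product, dotProduct, Complex.re_sum, Pi.star_apply]
    _ ≤ ∑ p ∈ G ×ˢ (univ : Finset (Fin d)), ‖a p.1 p.2‖ * ‖b p.1 p.2‖ := sum_le_sum fun p _ =>
        (Complex.re_le_norm _).trans_eq (by rw [norm_mul, norm_star])
    _ ≤ √(l2NormSq G a) * √(l2NormSq G b) := by
        rw [hflat, hflat]; exact Real.sum_mul_le_sqrt_mul_sqrt _ _ _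

lemma hasDerivWithinAt_l2NormSq {c : (Fin d → ℤ) → ℝ → Fin d → ℂ}
    {c' : (Fin d → ℤ) → Fin d → ℂ} {s : Set ℝ} {x : ℝ}
    (hc : ∀ k ∈ G, HasDerivWithinAt (c k) (c' k) s x) :
    HasDerivWithinAt (fun t => l2NormSq G fun k => c k t)
      (2 * l2Inner G (fun k => c k x) c') s x := by
  have hcomp : ∀ k ∈ G, ∀ r, HasDerivWithinAt (fun t => Complex.normSq (c k t r))
      (2 * (star (c k x r) * c' k r).re) s x := fun k hk r => by
    simpa [← Complex.sq_norm, Complex.inner, mul_comm] using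
      (hasDerivWithinAt_pi.1 (hc k hk) r).norm_sq
  refine (HasDerivWithinAt.fun_sum fun k hk =>
    HasDerivWithinAt.fun_sum (u := univ) fun r _ => hcomp k hk r).congr_deriv ?_
  simp only [l2Inner, dotProduct, Complex.re_sum, mul_sum, Pi.star_apply]

lemma continuousOn_l2NormSq {c : (Fin d → ℤ) → ℝ → Fin d → ℂ} {s : Set ℝ} (hc : ∀ k ∈ G, ContinuousOn (c k) s) :
    ContinuousOn (fun t => l2NormSq G fun k => c k t) s :=
  continuousOn_finsetSum _ fun k hk => continuousOn_finsetSum _ fun r _ =>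
    Complex.continuous_normSq.comp_continuousOn ((continuous_apply r).comp_continuousOn (hc k hk))

end GalerkinEnergy

section GalerkinIdentity

variable {d : ℕ} (ν : ℝ) (G : Finset (Fin d → ℤ)) (f γ : (Fin d → ℤ) → ℝ → Fin d → ℂ)

lemma galRHS_eq (k : Fin d → ℤ) (t : ℝ) :
    galRHS d ν G f γ k t = (-((ν : ℂ) * (zNormSq k : ℂ))) • γ k t
      - (Complex.I * (((2 * Real.pi) ^ (-(d : ℝ) / 2) : ℝ) : ℂ)) •
        ∑ h ∈ G, zcDot (k - h) (γ h t) • projPerp k (γ (k - h) t)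
      + f k t := by
  ext r
  simp [galRHS, Finset.sum_apply, mul_assoc]

lemma star_dotProduct_galRHS {k : Fin d → ℤ} {t : ℝ} (hconj : star (γ k t) = γ (-k) t)
    (hdiv : zcDot (-k) (γ (-k) t) = 0) :
    star (γ k t) ⬝ᵥ galRHS d ν G f γ k t = -((ν : ℂ) * (zNormSq k : ℂ)) * (star (γ k t) ⬝ᵥ γ k t)
      - Complex.I * (((2 * Real.pi) ^ (-(d : ℝ) / 2) : ℝ) : ℂ) *
        ∑ h ∈ G, zcDot (k - h) (γ h t) * (γ (k - h) t ⬝ᵥ γ (-k) t)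
      + star (γ k t) ⬝ᵥ f k t := by
  have hk : zcDot k (γ (-k) t) = 0 := by rwa [← neg_neg k, zcDot_neg, neg_eq_zero, neg_neg]
  have hproj : ∀ h, star (γ k t) ⬝ᵥ projPerp k (γ (k - h) t) = γ (k - h) t ⬝ᵥ γ (-k) t :=
    fun h => by rw [hconj, dotProduct_projPerp_of_zcDot_eq_zero hk, dotProduct_comm]
  simp only [galRHS_eq, dotProduct_add, dotProduct_sub, dotProduct_smul, dotProduct_sum, hproj,
    smul_eq_mul]

lemma l2Inner_galRHS {t : ℝ} (hGsym : ∀ k ∈ G, -k ∈ G) (hγ0 : ∀ j ∉ G, γ j t = 0)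
    (hconj : ∀ k ∈ G, star (γ k t) = γ (-k) t) (hdiv : ∀ k ∈ G, zcDot k (γ k t) = 0) :
    l2Inner G (fun k => γ k t) (fun k => galRHS d ν G f γ k t)
      = -ν * ∑ k ∈ G, (zNormSq k : ℝ) * ∑ r, Complex.normSq (γ k t r)
        + l2Inner G (fun k => γ k t) (fun k => f k t) := by
  have htriads : ∑ k ∈ G, ∑ h ∈ G, zcDot (k - h) (γ h t) * (γ (k - h) t ⬝ᵥ γ (-k) t) = 0 := by
    rw [sum_comm]
    exact sum_eq_zero fun h hh => sum_triad_eq_zero hGsym hγ0 (hdiv h hh)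
  have hsq : ∀ k, star (γ k t) ⬝ᵥ γ k t = ((∑ r, Complex.normSq (γ k t r) : ℝ) : ℂ) := fun k => by
    simp [dotProduct, Complex.normSq_eq_conj_mul_self]
  rw [l2Inner, l2Inner, ← Complex.re_sum, ← Complex.re_sum,
    sum_congr rfl fun k hk => star_dotProduct_galRHS ν G f γ (hconj k hk)
      (hdiv (-k) (hGsym k hk)),
    sum_add_distrib, sum_sub_distrib, ← mul_sum, htriads, mul_zero, sub_zero, Complex.add_re,
    Complex.re_sum, mul_sum]
  congr 1
  refine sum_congr rfl fun k _ => ?_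
  rw [hsq, ← Complex.ofReal_intCast, ← Complex.ofReal_mul, ← Complex.ofReal_neg,
    ← Complex.ofReal_mul, Complex.ofReal_re]
  ring

end GalerkinIdentity

lemma l2Inner_galRHS_le {d : ℕ} {ν : ℝ} (hν : 0 ≤ ν) {G : Finset (Fin d → ℤ)}
    (hG0 : (0 : Fin d → ℤ) ∉ G) (hGsym : ∀ k ∈ G, -k ∈ G) {f γ : (Fin d → ℤ) → ℝ → Fin d → ℂ}
    {t : ℝ} (hγ0 : ∀ j ∉ G, γ j t = 0) (hconj : ∀ k ∈ G, star (γ k t) = γ (-k) t)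
    (hdiv : ∀ k ∈ G, zcDot k (γ k t) = 0) :
    l2Inner G (fun k => γ k t) (fun k => galRHS d ν G f γ k t)
      ≤ -ν * l2NormSq G (fun k => γ k t)
        + √(l2NormSq G fun k => γ k t) * √(l2NormSq G fun k => f k t) := by
  have hdissipation : l2NormSq G (fun k => γ k t)
      ≤ ∑ k ∈ G, (zNormSq k : ℝ) * ∑ r, Complex.normSq (γ k t r) :=
    sum_le_sum fun k hk => le_mul_of_one_le_left (sum_nonneg fun _ _ => Complex.normSq_nonneg _)
      (by exact_mod_cast one_le_zNormSq (ne_of_mem_of_not_mem hk hG0))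
  rw [l2Inner_galRHS ν G f γ hGsym hγ0 hconj hdiv]
  linarith [mul_le_mul_of_nonneg_left hdissipation hν,
    l2Inner_le_sqrt_mul_sqrt G (fun k => γ k t) (fun k => f k t)]

theorem stmt13_general (d : ℕ) (ν : ℝ) (hν : 0 ≤ ν) (T : EReal)
    (G : Finset (Fin d → ℤ)) (hG0 : (0 : Fin d → ℤ) ∉ G) (hGsym : ∀ k ∈ G, -k ∈ G)
    (f : (Fin d → ℤ) → ℝ → Fin d → ℂ)
    (hfc : ∀ k ∈ G, ContinuousOn (f k) {t : ℝ | 0 ≤ t ∧ (t : EReal) < T})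
    (γ : (Fin d → ℤ) → ℝ → Fin d → ℂ)
    (hγ0 : ∀ j, j ∉ G → ∀ t : ℝ, γ j t = 0)
    (hODE : ∀ k ∈ G, ∀ t : ℝ, 0 ≤ t → (t : EReal) < T →
      HasDerivWithinAt (γ k) (galRHS d ν G f γ k t) {τ : ℝ | 0 ≤ τ ∧ (τ : EReal) < T} t)
    (hconj : ∀ k ∈ G, ∀ t : ℝ, 0 ≤ t → (t : EReal) < T →
      ∀ r, (starRingEnd ℂ) (γ k t r) = γ (-k) t r)
    (hdiv : ∀ k ∈ G, ∀ t : ℝ, 0 ≤ t → (t : EReal) < T → zcDot k (γ k t) = 0) :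
    ∀ t : ℝ, 0 ≤ t → (t : EReal) < T →
      Real.sqrt (∑ k ∈ G, ∑ r, Complex.normSq (γ k t r)) ≤
        (Real.sqrt (∑ k ∈ G, ∑ r, Complex.normSq (γ k 0 r))
          + ∫ s in (0 : ℝ)..t, Real.exp (ν * s) *
              Real.sqrt (∑ k ∈ G, ∑ r, Complex.normSq (f k s r))) *
          Real.exp (-ν * t) := by
  intro t ht0 htT
  set s := {τ : ℝ | 0 ≤ τ ∧ (τ : EReal) < T}
  have hIcc : Icc 0 t ⊆ s := fun τ hτ => ⟨hτ.1, (EReal.coe_le_coe_iff.2 hτ.2).trans_lt htT⟩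
  have hγc : ∀ k ∈ G, ContinuousOn (γ k) s := fun k hk τ hτ =>
    (hODE k hk τ hτ.1 hτ.2).continuousWithinAt
  have hbound := sqrt_le_of_deriv_le_dissipative (ν := ν) ht0
    ((continuousOn_l2NormSq G hγc).mono hIcc)
    (fun τ hτ => (hasDerivWithinAt_l2NormSq G fun k hk =>
      hODE k hk τ (hIcc (Ico_subset_Icc_self hτ)).1 (hIcc (Ico_subset_Icc_self hτ)).2).mono hIcc)
    (fun τ _ => l2NormSq_nonneg G _) ((continuousOn_l2NormSq G hfc).mono hIcc).sqrt
    (fun τ _ => Real.sqrt_nonneg _) fun τ hτ => by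
      obtain ⟨hτ0, hτT⟩ := hIcc (Ico_subset_Icc_self hτ)
      linarith [l2Inner_galRHS_le hν hG0 hGsym (f := f) (fun j hj => hγ0 j hj τ)
        (fun k hk => funext (hconj k hk τ hτ0 hτT)) fun k hk => hdiv k hk τ hτ0 hτT]
  simpa [l2NormSq] using hbound

/-- L² a priori bound of Lemma 6.4(iii) of the paper, in Fourier components. -/
theorem stmt13 (d : ℕ) (hd : 2 ≤ d) (ν : ℝ) (hν : 0 ≤ ν) (T : EReal) (hT : 0 < T)
    (G : Finset (Fin d → ℤ)) (hG0 : (0 : Fin d → ℤ) ∉ G) (hGsym : ∀ k ∈ G, -k ∈ G)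
    (f : (Fin d → ℤ) → ℝ → Fin d → ℂ)
    (hfc : ∀ k ∈ G, ContinuousOn (f k) {t : ℝ | 0 ≤ t ∧ (t : EReal) < T})
    (γ : (Fin d → ℤ) → ℝ → Fin d → ℂ)
    (hγ0 : ∀ j, j ∉ G → ∀ t : ℝ, γ j t = 0)
    (hODE : ∀ k ∈ G, ∀ t : ℝ, 0 ≤ t → (t : EReal) < T →
      HasDerivWithinAt (γ k) (galRHS d ν G f γ k t) {τ : ℝ | 0 ≤ τ ∧ (τ : EReal) < T} t)
    (hconj : ∀ k ∈ G, ∀ t : ℝ, 0 ≤ t → (t : EReal) < T →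
      ∀ r, (starRingEnd ℂ) (γ k t r) = γ (-k) t r)
    (hdiv : ∀ k ∈ G, ∀ t : ℝ, 0 ≤ t → (t : EReal) < T → zcDot k (γ k t) = 0) :
    ∀ t : ℝ, 0 ≤ t → (t : EReal) < T →
      Real.sqrt (∑ k ∈ G, ∑ r, Complex.normSq (γ k t r)) ≤
        (Real.sqrt (∑ k ∈ G, ∑ r, Complex.normSq (γ k 0 r))
          + ∫ s in (0 : ℝ)..t, Real.exp (ν * s) *
              Real.sqrt (∑ k ∈ G, ∑ r, Complex.normSq (f k s r))) *
          Real.exp (-ν * t) :=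
  stmt13_general d ν hν T G hG0 hGsym f hfc γ hγ0 hODE hconj hdiv
end
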